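/- Let {M_j}_{j∈S} be a finite family of Hermitian complex matrices (all of the same size) that are mutually orthogonal in the sense that M_j M_k = 0 whenever j ≠ k. Then ‖Σ_{j∈S} M_j‖₁ = Σ_{j∈S} ‖M_j‖₁. -/

import Mathlib

open scoped Kronecker ComplexOrder
open Matrix

/-- The positive semidefinite square root of a positive semidefinite matrix
(junk value `0` on matrices that are not positive semidefinite). -/
noncomputable def psdSqrt {n : Type*} [Fintype n] [DecidableEq n] (A : Matrix n n ℂ) :
    Matrix n n ℂ :=
  letI := Classical.propDecidable A.PosSemidef
  if h : A.PosSemidef then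
    (h.1.eigenvectorUnitary : Matrix n n ℂ) *
      Matrix.diagonal ((↑) ∘ (Real.sqrt ∘ h.1.eigenvalues)) *
      (star h.1.eigenvectorUnitary : Matrix n n ℂ) else 0

/-- The trace norm `‖A‖₁ = tr √(A Aᴴ)`. -/
noncomputable def traceNorm {n : Type*} [Fintype n] [DecidableEq n] (A : Matrix n n ℂ) : ℝ :=
  (psdSqrt (A * Aᴴ)).trace.re

/-- The fidelity `F(A,B) = ‖√A √B‖₁²` between positive semidefinite matrices. -/
noncomputable def fidelity {n : Type*} [Fintype n] [DecidableEq n] (A B : Matrix n n ℂ) : ℝ :=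
  traceNorm (psdSqrt A * psdSqrt B) ^ 2

/-- The Choi matrix `J(Φ) = (1/n) Σ_{j,k} E_{jk} ⊗ Φ(E_{jk})` of a map on matrices. -/
noncomputable def choi {n m : Type*} [Fintype n] [DecidableEq n] [Fintype m]
    (Φ : Matrix n n ℂ → Matrix m m ℂ) : Matrix (n × m) (n × m) ℂ :=
  (Fintype.card n : ℂ)⁻¹ • ∑ j : n, ∑ k : n,
    (Matrix.single j k (1 : ℂ)) ⊗ₖ Φ (Matrix.single j k (1 : ℂ))

/-- The extension `(id_F ⊗ Φ)` of a map on matrices by an ancilla of dimension `F`. -/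
def tensorExt (F : ℕ) {n m : Type*} (Φ : Matrix n n ℂ → Matrix m m ℂ)
    (ρ : Matrix (Fin F × n) (Fin F × n) ℂ) : Matrix (Fin F × m) (Fin F × m) ℂ :=
  Matrix.of fun p q => Φ (Matrix.of fun i j => ρ (p.1, i) (q.1, j)) p.2 q.2

/-- The diamond norm `‖Φ‖◇`: the supremum of `‖(id_F ⊗ Φ)(ρ)‖₁` over all finite ancilla
dimensions `F` and density matrices `ρ`. -/
noncomputable def diamondNorm {n m : Type*} [Fintype n] [DecidableEq n] [Fintype m]
    [DecidableEq m] (Φ : Matrix n n ℂ → Matrix m m ℂ) : ℝ :=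
  sSup { x : ℝ | ∃ (F : ℕ) (ρ : Matrix (Fin F × n) (Fin F × n) ℂ),
    ρ.PosSemidef ∧ ρ.trace = 1 ∧ x = traceNorm (tensorExt F Φ ρ) }

/-!
Orthogonal Hermitian matrices `M j` have orthogonal squares `M j ^ 2`, and orthogonal positive
elements of a C⋆-algebra have orthogonal square roots. Hence `∑ j, √(M j ^ 2)` is a positive
square root of `(∑ j, M j) ^ 2 = ∑ j, M j ^ 2`, so by uniqueness it is `√((∑ j, M j) ^ 2)`;
taking traces gives the additivity of the trace norm.
-/

open scoped MatrixOrder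

theorem Finset.sum_mul_sum_self_of_pairwise_mul_eq_zero {R ι : Type*}
    [NonUnitalNonAssocSemiring R] {s : Finset ι} {a : ι → R}
    (h : (s : Set ι).Pairwise fun i j => a i * a j = 0) :
    (∑ i ∈ s, a i) * ∑ i ∈ s, a i = ∑ i ∈ s, a i * a i := by
  rw [Finset.sum_mul_sum]
  exact Finset.sum_congr rfl fun i hi =>
    Finset.sum_eq_single_of_mem i hi fun j hj hji => h hi hj hji.symm

namespace CFC

variable {A : Type*} [CStarAlgebra A] [PartialOrder A] [StarOrderedRing A]

theorem sqrt_mul_sqrt_eq_zero {a b : A} (ha : 0 ≤ a) (hb : 0 ≤ b) (hab : a * b = 0) :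
    sqrt a * sqrt b = 0 := by
  have hx : star (sqrt a) = sqrt a := (sqrt_nonneg a).isSelfAdjoint.star_eq
  have hy : star (sqrt b) = sqrt b := (sqrt_nonneg b).isSelfAdjoint.star_eq
  have hxb : sqrt a * b = 0 := by
    rw [← CStarRing.star_mul_self_eq_zero_iff, star_mul, hx, hb.isSelfAdjoint.star_eq,
      mul_assoc, ← mul_assoc (sqrt a), sqrt_mul_sqrt_self a, hab, mul_zero]
  rw [← CStarRing.mul_star_self_eq_zero_iff, star_mul, hx, hy, mul_assoc,
    ← mul_assoc (sqrt b), sqrt_mul_sqrt_self b, ← mul_assoc, hxb, zero_mul]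

theorem sqrt_sum_of_pairwise_mul_eq_zero {ι : Type*} {s : Finset ι} {a : ι → A}
    (ha : ∀ i ∈ s, 0 ≤ a i) (h : (s : Set ι).Pairwise fun i j => a i * a j = 0) :
    sqrt (∑ i ∈ s, a i) = ∑ i ∈ s, sqrt (a i) := by
  refine sqrt_unique ?_ (Finset.sum_nonneg fun i _ => sqrt_nonneg (a i))
  rw [Finset.sum_mul_sum_self_of_pairwise_mul_eq_zero fun i hi j hj hij =>
    sqrt_mul_sqrt_eq_zero (ha i hi) (ha j hj) (h hi hj hij)]
  exact Finset.sum_congr rfl fun i hi => sqrt_mul_sqrt_self (a i) (ha i hi)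

end CFC

theorem Matrix.PosSemidef.psdSqrt_eq_sqrt {n : Type*} [Fintype n] [DecidableEq n]
    {A : Matrix n n ℂ} (hA : A.PosSemidef) : psdSqrt A = CFC.sqrt A := by
  rw [psdSqrt, dif_pos hA, CFC.sqrt_eq_cfc, cfc_nnreal_eq_real _ A hA.nonneg, hA.1.cfc_eq]
  simp only [IsHermitian.cfc, Real.coe_toNNReal', Function.comp_def, Real.coe_sqrt]
  congr 3
  funext i
  rw [max_eq_left (hA.eigenvalues_nonneg i)]
  rfl

theorem Matrix.IsHermitian.traceNorm_eq {n : Type*} [Fintype n] [DecidableEq n]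
    {A : Matrix n n ℂ} (hA : A.IsHermitian) : traceNorm A = (CFC.sqrt (A * A)).trace.re := by
  have hAA : (A * A).PosSemidef := by
    simpa only [hA.eq] using posSemidef_self_mul_conjTranspose A
  rw [traceNorm, hA.eq, hAA.psdSqrt_eq_sqrt]

/-- For a finite family of mutually orthogonal Hermitian matrices,
the trace norm of the sum is the sum of the trace norms. -/
theorem traceNorm_sum_of_orthogonal {n S : Type*} [Fintype n] [DecidableEq n] [Fintype S]
    (M : S → Matrix n n ℂ) (hHerm : ∀ j, (M j).IsHermitian)
    (hOrth : ∀ j k, j ≠ k → M j * M k = 0) :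
    traceNorm (∑ j, M j) = ∑ j, traceNorm (M j) := by
  have hSqNonneg : ∀ j ∈ Finset.univ, 0 ≤ M j * M j := fun j _ => by
    simpa only [(hHerm j).eq] using (posSemidef_self_mul_conjTranspose (M j)).nonneg
  have hSqOrth : Pairwise fun j k => M j * M j * (M k * M k) = 0 := fun j k hjk => by
    beta_reduce
    rw [mul_assoc, ← mul_assoc (M j) (M k), hOrth j k hjk, zero_mul, mul_zero]
  -- The operator norm makes `Matrix n n ℂ` a C⋆-algebra, whose `CFC.sqrt` is the Hermitian one.
  open scoped Matrix.Norms.L2Operator in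
  rw [IsHermitian.traceNorm_eq (isSelfAdjoint_sum _ fun j _ => hHerm j),
    Finset.sum_mul_sum_self_of_pairwise_mul_eq_zero (Pairwise.set_pairwise hOrth _),
    CFC.sqrt_sum_of_pairwise_mul_eq_zero hSqNonneg (hSqOrth.set_pairwise _), trace_sum,
    Complex.re_sum]
  exact Finset.sum_congr rfl fun j _ => ((hHerm j).traceNorm_eq).symm
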